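/- arXiv:2307.00244 — 2 statements merged into one kernel-verified Lean document; each statement's English description precedes it below -/
import Mathlib

section
/- Let Θ_q' denote the complex derivative of Θ_q on ℂ ∖ {0}. Then for every x ≠ 0 one has q Θ_q'(qx) = −q Θ_q(x) − q x Θ_q'(x). Consequently, for every α ∈ ℂ, the function z(x) = α x Θ_q'(x)/Θ_q(x) satisfies z(qx) = z(x) + α for every x ≠ 0 with Θ_q(x) ≠ 0; that is, z is a solution of the q-difference equation y(qx) = y(x) + α, meromorphic on ℂ ∖ {0}. -/
/-!
Shifting the summation index by one in the defining series gives `Θ_q(qx) = −q x Θ_q(x)`, because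
`(n + 1)n/2 = n(n − 1)/2 + n`. On an annulus `r < |x| < R` the `n`-th term is bounded by
`|q|^{−n(n−1)/2} max(R, 1/r)^{|n|}`, whose consecutive ratios tend to `0`; so the series converges
normally there and `Θ_q` is holomorphic on `ℂ ∖ {0}`. Differentiating the functional equation gives
the identity for `Θ_q'`, and dividing it by the functional equation shows that the logarithmic
derivative `x Θ_q'(x)/Θ_q(x)` increases by exactly `1` under `x ↦ qx`.
-/

/-- The Jacobi `q`-theta function `Θ_q(x) = ∑_{n ∈ ℤ} (−1)ⁿ q^{−n(n−1)/2} xⁿ`. -/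
noncomputable def thetaQ (q x : ℂ) : ℂ :=
  ∑' n : ℤ, (-1 : ℂ) ^ n * q ^ (-(n * (n - 1) / 2)) * x ^ n

open Filter Topology Metric

lemma Int.add_one_mul_ediv_two (n : ℤ) : (n + 1) * n / 2 = n * (n - 1) / 2 + n := by
  obtain ⟨a, ha⟩ := (Int.even_mul_pred_self n).two_dvd
  rw [show (n + 1) * n = n * (n - 1) + 2 * n by ring, ha]
  omega

lemma summable_zpow_mul_pow {A : ℝ} (hA : 1 < A) (M : ℝ) {e : ℕ → ℤ}
    (he : ∀ n : ℕ, e (n + 1) ≤ e n - n) : Summable fun n : ℕ => A ^ e n * M ^ n := by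
  have hA0 : 0 < A := zero_lt_one.trans hA
  have hratio : Tendsto (fun n : ℕ => A ^ (-(n : ℤ)) * |M|) atTop (𝓝 0) := by
    simpa [zpow_neg, ← inv_pow] using
      (tendsto_pow_atTop_nhds_zero_of_lt_one (inv_nonneg.2 hA0.le)
        (inv_lt_one_of_one_lt₀ hA)).mul_const |M|
  refine summable_of_ratio_norm_eventually_le (r := 1 / 2) (by norm_num) ?_
  filter_upwards [hratio.eventually_le_const (by norm_num : (0 : ℝ) < 1 / 2)] with n hn
  simp only [norm_mul, norm_zpow, norm_pow, Real.norm_eq_abs, abs_of_pos hA0]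
  calc A ^ e (n + 1) * |M| ^ (n + 1)
      ≤ A ^ (e n + -(n : ℤ)) * |M| ^ (n + 1) := by
        gcongr
        · exact hA.le
        · linarith [he n]
    _ = (A ^ (-(n : ℤ)) * |M|) * (A ^ e n * |M| ^ n) := by
        rw [zpow_add₀ hA0.ne']; ring
    _ ≤ 1 / 2 * (A ^ e n * |M| ^ n) := by gcongr

lemma summable_zpow_neg_mul_sub_one_ediv_two {A : ℝ} (hA : 1 < A) (M : ℝ) :
    Summable fun n : ℤ => A ^ (-(n * (n - 1) / 2)) * M ^ n.natAbs := by
  refine Summable.of_nat_of_neg ?_ ?_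
  · refine (summable_zpow_mul_pow hA M (e := fun n : ℕ => -((n : ℤ) * (n - 1) / 2))
      fun n => ?_).congr fun n => by simp
    have := Int.add_one_mul_ediv_two n
    push_cast
    rw [add_sub_cancel_right]
    omega
  · refine (summable_zpow_mul_pow hA M (e := fun n : ℕ => -(-(n : ℤ) * (-n - 1) / 2))
      fun n => ?_).congr fun n => by simp
    have := Int.add_one_mul_ediv_two (-(n : ℤ) - 1)
    push_cast
    ring_nf at this ⊢
    omega

lemma norm_zpow_le_max_pow_natAbs {r R : ℝ} (hr : 0 < r) {w : ℂ} (hrw : r ≤ ‖w‖)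
    (hwR : ‖w‖ ≤ R) (n : ℤ) : ‖w ^ n‖ ≤ max R r⁻¹ ^ n.natAbs := by
  have hw : 0 < ‖w‖ := hr.trans_le hrw
  rw [norm_zpow]
  obtain ⟨m, rfl | rfl⟩ := Int.eq_nat_or_neg n
  · rw [zpow_natCast, Int.natAbs_natCast]
    exact pow_le_pow_left₀ hw.le (hwR.trans (le_max_left _ _)) _
  · rw [zpow_neg, zpow_natCast, ← inv_pow, Int.natAbs_neg, Int.natAbs_natCast]
    exact pow_le_pow_left₀ (inv_nonneg.2 hw.le)
      ((inv_anti₀ hr hrw).trans (le_max_right _ _)) _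

lemma differentiableOn_thetaQ_annulus {q : ℂ} (hq : 1 < ‖q‖) {r : ℝ} (hr : 0 < r) (R : ℝ) :
    DifferentiableOn ℂ (thetaQ q) (ball 0 R \ closedBall 0 r) := by
  refine Complex.differentiableOn_tsum_of_summable_norm
    (summable_zpow_neg_mul_sub_one_ediv_two hq (max R r⁻¹)) (fun n w hw => ?_)
    (isOpen_ball.sdiff isClosed_closedBall) fun n w hw => ?_
  · have hw0 : w ≠ 0 := by rintro rfl; simp [hr.le] at hw
    exact ((differentiableAt_zpow.2 (Or.inl hw0)).const_mul _).differentiableWithinAt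
  · rw [Set.mem_sdiff, mem_ball_zero_iff, mem_closedBall_zero_iff, not_le] at hw
    rw [norm_mul, norm_mul, norm_zpow, norm_zpow, norm_neg, norm_one, one_zpow, one_mul]
    gcongr
    exact norm_zpow_le_max_pow_natAbs hr hw.2.le hw.1.le n

lemma analyticOnNhd_thetaQ {q : ℂ} (hq : 1 < ‖q‖) : AnalyticOnNhd ℂ (thetaQ q) {x | x ≠ 0} := by
  refine DifferentiableOn.analyticOnNhd (fun x hx => ?_) isOpen_ne
  have hx : 0 < ‖x‖ := norm_pos_iff.2 hx
  have hmem : x ∈ ball 0 (‖x‖ + 1) \ closedBall 0 (‖x‖ / 2) := by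
    simp [hx]
  exact ((differentiableOn_thetaQ_annulus hq (half_pos hx) _).differentiableAt
    ((isOpen_ball.sdiff isClosed_closedBall).mem_nhds hmem)).differentiableWithinAt

lemma thetaQ_mul_left {q : ℂ} (hq : q ≠ 0) {x : ℂ} (hx : x ≠ 0) :
    thetaQ q (q * x) = -q * x * thetaQ q x := by
  rw [thetaQ, thetaQ, ← tsum_mul_left]
  conv_rhs => rw [← (Equiv.subRight (1 : ℤ)).tsum_eq]
  refine tsum_congr fun n => ?_
  have hexp : -((n - 1) * (n - 1 - 1) / 2) = -(n * (n - 1) / 2) + (n - 1) := by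
    have := Int.add_one_mul_ediv_two (n - 1)
    rw [sub_add_cancel] at this
    omega
  rw [Equiv.subRight_apply, hexp, mul_zpow, zpow_add₀ hq, zpow_sub₀ (neg_ne_zero.2 one_ne_zero),
    zpow_sub₀ hx, zpow_sub₀ hq]
  field_simp

lemma deriv_thetaQ_mul_left {q : ℂ} (hq : 1 < ‖q‖) {x : ℂ} (hx : x ≠ 0) :
    q * deriv (thetaQ q) (q * x) = -q * thetaQ q x - q * x * deriv (thetaQ q) x := by
  have hq0 : q ≠ 0 := norm_pos_iff.1 (zero_lt_one.trans hq)
  have hfun : (fun y => thetaQ q (q * y)) =ᶠ[𝓝 x] fun y => -q * y * thetaQ q y :=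
    eventually_of_mem (isOpen_ne.mem_nhds hx) fun y hy => thetaQ_mul_left hq0 hy
  have hθ : HasDerivAt (thetaQ q) (deriv (thetaQ q) x) x :=
    ((analyticOnNhd_thetaQ hq x hx).differentiableAt).hasDerivAt
  have hrhs : HasDerivAt (fun y => -q * y * thetaQ q y)
      (-q * 1 * thetaQ q x + -q * x * deriv (thetaQ q) x) x :=
    ((hasDerivAt_id' x).const_mul (-q)).mul hθ
  rw [← smul_eq_mul, ← deriv_comp_mul_left, hfun.deriv_eq, hrhs.deriv]
  ring

lemma thetaQ_logDeriv_mul_left {q : ℂ} (hq : 1 < ‖q‖) {x : ℂ} (hx : x ≠ 0)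
    (hθ : thetaQ q x ≠ 0) :
    q * x * deriv (thetaQ q) (q * x) / thetaQ q (q * x)
      = x * deriv (thetaQ q) x / thetaQ q x + 1 := by
  have hq0 : q ≠ 0 := norm_pos_iff.1 (zero_lt_one.trans hq)
  rw [thetaQ_mul_left hq0 hx, mul_right_comm q x, deriv_thetaQ_mul_left hq hx]
  field_simp
  ring

/-- The derivative of `Θ_q` satisfies
`q Θ_q'(qx) = −q Θ_q(x) − q x Θ_q'(x)` for `x ≠ 0`; consequently, for any `α ∈ ℂ`,
the function `z(x) = α x Θ_q'(x)/Θ_q(x)` satisfies `z(qx) = z(x) + α` whenever `x ≠ 0`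
and `Θ_q(x) ≠ 0`, and is meromorphic on `ℂ ∖ {0}`. -/
theorem theta_log_deriv_solution (q : ℂ) (hq : 1 < ‖q‖) :
    (∀ x : ℂ, x ≠ 0 →
        q * deriv (thetaQ q) (q * x) = -q * thetaQ q x - q * x * deriv (thetaQ q) x) ∧
      ∀ α : ℂ,
        (∀ x : ℂ, x ≠ 0 → thetaQ q x ≠ 0 →
          α * (q * x) * deriv (thetaQ q) (q * x) / thetaQ q (q * x)
            = α * x * deriv (thetaQ q) x / thetaQ q x + α) ∧
        MeromorphicOn (fun x : ℂ => α * x * deriv (thetaQ q) x / thetaQ q x)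
          {x : ℂ | x ≠ 0} := by
  have hθ := analyticOnNhd_thetaQ hq
  refine ⟨fun x hx => deriv_thetaQ_mul_left hq hx, fun α => ⟨fun x hx hθx => ?_, ?_⟩⟩
  · simp only [mul_assoc α, mul_div_assoc α, thetaQ_logDeriv_mul_left hq hx hθx, mul_add_one]
  · exact ((analyticOnNhd_const.mul analyticOnNhd_id).mul hθ.deriv).meromorphicOn.div
      hθ.meromorphicOn
end

section
/- For every integer n ≥ 0 the following identity holds: (n+1)/(q;q)_{n+1} = −∑_{k=0}^{n} 1/((q^{k+1} − 1)(q;q)_{n−k}). -/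
/-- The `q`-Pochhammer symbol `(q;q)_n = ∏_{k=1}^n (1 − qᵏ)`. -/
noncomputable def qPoch (q : ℂ) (n : ℕ) : ℂ :=
  ∏ k ∈ Finset.range n, (1 - q ^ (k + 1))

/-!
Write `aₙ = 1/(q;q)ₙ`, `bₖ = 1/(1 − q^{k+1})` and `Sₙ = ∑_{k ≤ n} bₖ a_{n−k}` (`qConv q n`);
the identity says `Sₙ = (n+1) a_{n+1}`. Splitting
`1 − q^{n+2} = (1 − q^{n+1−k}) + q^{n+1−k} (1 − q^{k+1})` in each term of `S_{n+1} (1 − q^{n+2})`,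
the first parts sum to `Sₙ` because `a_{m+1} (1 − q^{m+1}) = aₘ`, and the second parts form the
telescoping sum `∑_{m ≤ n+1} qᵐ aₘ = a_{n+1}`. Hence `S_{n+1} (1 − q^{n+2}) = Sₙ + a_{n+1}`, and
induction on `n` concludes.
-/

open Finset

theorem pow_succ_ne_one_of_one_lt_norm {𝕜 : Type*} [NormedDivisionRing 𝕜] {q : 𝕜}
    (hq : 1 < ‖q‖) (k : ℕ) : q ^ (k + 1) ≠ 1 := by
  intro h
  have h' := one_lt_pow₀ hq k.succ_ne_zero
  rw [← norm_pow, h, norm_one] at h'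
  exact lt_irrefl _ h'

theorem qPoch_succ (q : ℂ) (n : ℕ) : qPoch q (n + 1) = qPoch q n * (1 - q ^ (n + 1)) :=
  prod_range_succ _ _

section

variable {q : ℂ}

theorem inv_qPoch_succ_mul (hq : ∀ k : ℕ, q ^ (k + 1) ≠ 1) (n : ℕ) :
    (qPoch q (n + 1))⁻¹ * (1 - q ^ (n + 1)) = (qPoch q n)⁻¹ := by
  rw [qPoch_succ, mul_inv, mul_assoc, inv_mul_cancel₀ (sub_ne_zero.2 (hq n).symm), mul_one]

theorem sum_pow_mul_inv_qPoch (hq : ∀ k : ℕ, q ^ (k + 1) ≠ 1) (n : ℕ) :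
    ∑ m ∈ range (n + 1), q ^ m * (qPoch q m)⁻¹ = (qPoch q n)⁻¹ := by
  induction n with
  | zero => simp [qPoch]
  | succ n ih =>
    rw [sum_range_succ, ih, ← inv_qPoch_succ_mul hq n]
    ring

theorem one_sub_pow_eq_add {R : Type*} [CommRing R] {m k : ℕ} (hk : k ≤ m) (q : R) :
    1 - q ^ (m + 1) = (1 - q ^ (m - k)) + q ^ (m - k) * (1 - q ^ (k + 1)) := by
  rw [show m + 1 = m - k + (k + 1) by omega, pow_add]
  ring

noncomputable def qConv (q : ℂ) (n : ℕ) : ℂ :=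
  ∑ k ∈ range (n + 1), (1 - q ^ (k + 1))⁻¹ * (qPoch q (n - k))⁻¹

theorem qConv_succ_mul (hq : ∀ k : ℕ, q ^ (k + 1) ≠ 1) (n : ℕ) :
    qConv q (n + 1) * (1 - q ^ (n + 2)) = qConv q n + (qPoch q (n + 1))⁻¹ := by
  have split : ∀ k ∈ range (n + 2),
      (1 - q ^ (k + 1))⁻¹ * (qPoch q (n + 1 - k))⁻¹ * (1 - q ^ (n + 2)) =
        (1 - q ^ (k + 1))⁻¹ * ((qPoch q (n + 1 - k))⁻¹ * (1 - q ^ (n + 1 - k)))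
          + q ^ (n + 1 - k) * (qPoch q (n + 1 - k))⁻¹ := by
    intro k hk
    have hk' : 1 - q ^ (k + 1) ≠ 0 := sub_ne_zero.2 (hq k).symm
    rw [one_sub_pow_eq_add (Nat.le_of_lt_succ (mem_range.1 hk))]
    field_simp
  have lower : ∑ k ∈ range (n + 2),
      (1 - q ^ (k + 1))⁻¹ * ((qPoch q (n + 1 - k))⁻¹ * (1 - q ^ (n + 1 - k))) = qConv q n := by
    rw [sum_range_succ, Nat.sub_self, pow_zero, sub_self, mul_zero, mul_zero, add_zero]
    refine sum_congr rfl fun k hk => ?_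
    rw [show n + 1 - k = n - k + 1 by have := mem_range.1 hk; omega, inv_qPoch_succ_mul hq]
  have top : ∑ k ∈ range (n + 2), q ^ (n + 1 - k) * (qPoch q (n + 1 - k))⁻¹ =
      (qPoch q (n + 1))⁻¹ := by
    rw [← sum_pow_mul_inv_qPoch hq (n + 1)]
    exact sum_range_reflect (fun m => q ^ m * (qPoch q m)⁻¹) (n + 2)
  rw [qConv, sum_mul, sum_congr rfl split, sum_add_distrib, lower, top]

theorem qConv_eq (hq : ∀ k : ℕ, q ^ (k + 1) ≠ 1) (n : ℕ) :
    qConv q n = (n + 1) * (qPoch q (n + 1))⁻¹ := by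
  induction n with
  | zero => simp [qConv, qPoch]
  | succ n ih =>
    apply mul_right_cancel₀ (sub_ne_zero.2 (hq (n + 1)).symm)
    rw [qConv_succ_mul hq, ih]
    push_cast
    linear_combination -(n + 2 : ℂ) * inv_qPoch_succ_mul hq (n + 1)

end

/-- For every `n ≥ 0`,
`(n+1)/(q;q)_{n+1} = −∑_{k=0}^n 1/((q^{k+1} − 1)(q;q)_{n−k})`. -/
theorem qPoch_identity (q : ℂ) (hq : 1 < ‖q‖) (n : ℕ) :
    ((n : ℂ) + 1) / qPoch q (n + 1)
      = -∑ k ∈ Finset.range (n + 1), 1 / ((q ^ (k + 1) - 1) * qPoch q (n - k)) := by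
  rw [div_eq_mul_inv, ← qConv_eq (pow_succ_ne_one_of_one_lt_norm hq), qConv, ← sum_neg_distrib]
  refine sum_congr rfl fun k _ => ?_
  rw [one_div, mul_inv, ← neg_sub 1 (q ^ (k + 1)), inv_neg, neg_mul, neg_neg]
end
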